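/- For all n ≥ 1, the number of classical (n,n)-parking functions is (n+1)^{n-1}. -/

import Mathlib

/-- The first unoccupied spot `s` with `p ≤ s ≤ n`, if any. -/
def forwardSpot (n : ℕ) (occ : Finset ℕ) (p : ℕ) : Option ℕ :=
  (List.range' p (n + 1 - p)).find? (fun s => decide (s ∉ occ))

/-- Classical (forward-only) parking process: cars park one by one, each at the
first free spot `≥` its preference; returns the final occupied set if all park. -/
def classicalPark (n : ℕ) : List ℕ → Finset ℕ → Option (Finset ℕ)
  | [], occ => some occ
  | p :: rest, occ =>
    match forwardSpot n occ p with
    | none => none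
    | some s => classicalPark n rest (insert s occ)

/-- Backward candidates `p-1, p-2, …, p-k` that are at least `1`. -/
def backwardCandidates (k p : ℕ) : List ℕ :=
  ((List.range k).map (fun i => p - (i + 1))).filter (fun s => decide (1 ≤ s))

/-- The spot where a car with preference `p` parks under the `k`-Naples rule. -/
def naplesSpot (n k : ℕ) (occ : Finset ℕ) (p : ℕ) : Option ℕ :=
  if p ∈ occ then
    match (backwardCandidates k p).find? (fun s => decide (s ∉ occ)) with
    | some s => some s
    | none => forwardSpot n occ p
  else some p

/-- `k`-Naples parking process; returns the final occupied set if all cars park. -/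
def naplesPark (n k : ℕ) : List ℕ → Finset ℕ → Option (Finset ℕ)
  | [], occ => some occ
  | p :: rest, occ =>
    match naplesSpot n k occ p with
    | none => none
    | some s => naplesPark n k rest (insert s occ)

/-- All cars park under the `k`-Naples rule and no car with preference `p ≤ k`
finds all of `1, …, p` occupied (no car exits the lot searching backward). -/
def naplesContainedAux (n k : ℕ) : List ℕ → Finset ℕ → Bool
  | [], _ => true
  | p :: rest, occ =>
    (decide (p ≤ k → ¬ Finset.Icc 1 p ⊆ occ)) &&
    match naplesSpot n k occ p with
    | none => false
    | some s => naplesContainedAux n k rest (insert s occ)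

/-- The (1-based) preference list of `a : Fin m → Fin n`. -/
def prefList {m n : ℕ} (a : Fin m → Fin n) : List ℕ :=
  (List.ofFn a).map (fun x => (x : ℕ) + 1)

/-- The set of classical `(m,n)`-parking functions. -/
def PFset (m n : ℕ) : Finset (Fin m → Fin n) :=
  Finset.univ.filter (fun a => (classicalPark n (prefList a) ∅).isSome)

/-- The set of `k`-Naples `(m,n)`-parking functions. -/
def NPFset (m n k : ℕ) : Finset (Fin m → Fin n) :=
  Finset.univ.filter (fun a => (naplesPark n k (prefList a) ∅).isSome)

/-- The set of contained `k`-Naples `(m,n)`-parking functions. -/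
def Bset (m n k : ℕ) : Finset (Fin m → Fin n) :=
  Finset.univ.filter (fun a => naplesContainedAux n k (prefList a) ∅)

/-- The set of `k`-left obstructed `(m,n)`-parking functions: `m` cars on
`n + k` spots whose first `k` spots are obstructed, forward-only rule. -/
def LPFset (m n k : ℕ) : Finset (Fin m → Fin (n + k)) :=
  Finset.univ.filter (fun a => (classicalPark (n + k) (prefList a) (Finset.Icc 1 k)).isSome)

/-!
All cars park iff, for every suffix `i, …, n` of the lot, the cars preferring a spot in it fit
there; for `0`-based preferences `a : Fin n → Fin n` this says that at least `t`
preferences are `< t` for every `t ≤ n`. Pollak's circle argument: read the preferences in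
`Fin (n + 1)`, a cyclic group. Among the `n + 1` diagonal shifts `g - c` of any `g`, exactly one
is a parking function, namely the one for which `c` is the first minimiser of
`m ↦ #{j | g j < m} - m` on `{0, …, n}`. Hence there are `(n + 1) ^ n / (n + 1)` parking
functions.
-/

open Finset

theorem List.countP_ofFn {m : ℕ} {α : Type*} (a : Fin m → α) (P : α → Prop) [DecidablePred P] :
    (List.ofFn a).countP (fun x => decide (P x)) = #{j | P (a j)} := by
  rw [← Multiset.coe_countP, ← Fin.univ_val_map, Multiset.countP_map]
  rfl

theorem forwardSpot_eq_some {n p s : ℕ} {occ : Finset ℕ} (h : forwardSpot n occ p = some s) :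
    p ≤ s ∧ s ≤ n ∧ s ∉ occ ∧ Ico p s ⊆ occ := by
  simp only [forwardSpot, List.find?_range'_eq_some, decide_not, Bool.not_eq_true',
    decide_eq_false_iff_not, List.mem_range'_1, Bool.not_not, decide_eq_true_eq] at h
  obtain ⟨hs, ⟨hps, hsn⟩, hbefore⟩ := h
  exact ⟨hps, by omega, hs, fun t ht => hbefore t (mem_Ico.1 ht).1 (mem_Ico.1 ht).2⟩

theorem Icc_subset_of_forwardSpot_eq_none {n p : ℕ} {occ : Finset ℕ}
    (h : forwardSpot n occ p = none) : Icc p n ⊆ occ := by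
  simp only [forwardSpot, List.find?_range'_eq_none, decide_not, Bool.not_not,
    decide_eq_true_eq] at h
  exact fun t ht => h t (mem_Icc.1 ht).1 (by have := (mem_Icc.1 ht).2; omega)

/-- For every suffix `i, …, n` of the lot, the cars preferring a spot in it fit into the spots
of it not already in `occ`. -/
def HasSuffixRoom (n : ℕ) (l : List ℕ) (occ : Finset ℕ) : Prop :=
  ∀ i, 1 ≤ i → i ≤ n → l.countP (fun p => decide (i ≤ p)) + #{s ∈ occ | i ≤ s} + i ≤ n + 1

theorem hasSuffixRoom_nil {n : ℕ} {occ : Finset ℕ} (hocc : ∀ s ∈ occ, s ≤ n) :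
    HasSuffixRoom n [] occ := by
  intro i _ _
  have : #{s ∈ occ | i ≤ s} ≤ #(Icc i n) :=
    card_le_card fun s hs => mem_Icc.2 ⟨(mem_filter.1 hs).2, hocc s (mem_filter.1 hs).1⟩
  simp only [List.countP_nil, Nat.card_Icc] at *
  omega

theorem not_hasSuffixRoom_cons_of_forwardSpot_eq_none {n p : ℕ} {rest : List ℕ}
    {occ : Finset ℕ} (hp : 1 ≤ p) (hpn : p ≤ n) (h : forwardSpot n occ p = none) :
    ¬ HasSuffixRoom n (p :: rest) occ := by
  intro hroom
  have hfull : #(Icc p n) ≤ #{s ∈ occ | p ≤ s} :=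
    card_le_card fun s hs => mem_filter.2 ⟨Icc_subset_of_forwardSpot_eq_none h hs, (mem_Icc.1 hs).1⟩
  have := hroom p hp hpn
  simp only [List.countP_cons, le_refl, decide_true, if_true, Nat.card_Icc] at *
  omega

theorem card_filter_le_add_of_Ico_subset {occ : Finset ℕ} {p i : ℕ} (hpi : p ≤ i)
    (h : Ico p i ⊆ occ) : #{x ∈ occ | i ≤ x} + (i - p) ≤ #{x ∈ occ | p ≤ x} := by
  rw [← Nat.card_Ico, ← card_union_of_disjoint (disjoint_left.2 fun x hx hx' => by
    simp only [mem_filter, mem_Ico] at hx hx'; omega)]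
  refine card_le_card fun x hx => ?_
  rcases mem_union.1 hx with hx | hx
  · exact mem_filter.2 ⟨(mem_filter.1 hx).1, hpi.trans (mem_filter.1 hx).2⟩
  · exact mem_filter.2 ⟨h hx, (mem_Ico.1 hx).1⟩

theorem hasSuffixRoom_cons_iff {n p s : ℕ} {rest : List ℕ} {occ : Finset ℕ} (hp : 1 ≤ p)
    (h : forwardSpot n occ p = some s) :
    HasSuffixRoom n (p :: rest) occ ↔ HasSuffixRoom n rest (insert s occ) := by
  obtain ⟨hps, hsn, hs, hgap⟩ := forwardSpot_eq_some h
  have hinsert (i : ℕ) :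
      #{x ∈ insert s occ | i ≤ x} = #{x ∈ occ | i ≤ x} + if i ≤ s then 1 else 0 := by
    rw [filter_insert]
    split_ifs
    · rw [card_insert_of_notMem (by simp [hs])]
    · simp
  have hcons (i : ℕ) : (p :: rest).countP (fun q => decide (i ≤ q)) =
      rest.countP (fun q => decide (i ≤ q)) + if i ≤ p then 1 else 0 := by
    simp only [List.countP_cons, decide_eq_true_eq]
  constructor
  · intro hroom i hi hin
    have hi_room := hroom i hi hin
    rw [hinsert, hcons] at *
    by_cases hip : i ≤ p
    · simp only [hip, hip.trans hps, if_true] at *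
      omega
    by_cases his : i ≤ s
    · -- the spots `p, …, i - 1` are occupied, so the room condition at `p` controls the one at `i`
      have hp_room := hroom p hp (hps.trans hsn)
      have hcars : rest.countP (fun q => decide (i ≤ q)) ≤ rest.countP (fun q => decide (p ≤ q)) :=
        List.countP_mono_left fun q _ hq => by simp only [decide_eq_true_eq] at *; omega
      have hspots := card_filter_le_add_of_Ico_subset (by omega : p ≤ i)
        (Ico_subset_Ico_right (by omega) |>.trans hgap)
      simp only [hip, his, hcons, le_refl, if_true, if_false] at *
      omega
    · simp only [hip, his, if_false] at *
      omega
  · intro hroom i hi hin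
    have := hroom i hi hin
    rw [hinsert, hcons] at *
    split_ifs at * <;> omega

theorem classicalPark_isSome_iff {n : ℕ} {l : List ℕ} {occ : Finset ℕ}
    (hl : ∀ p ∈ l, 1 ≤ p ∧ p ≤ n) (hocc : ∀ s ∈ occ, s ≤ n) :
    (classicalPark n l occ).isSome ↔ HasSuffixRoom n l occ := by
  induction l generalizing occ with
  | nil => simp [classicalPark, hasSuffixRoom_nil hocc]
  | cons p rest ih =>
    obtain ⟨hp, hpn⟩ := hl p List.mem_cons_self
    rw [classicalPark]
    cases h : forwardSpot n occ p with
    | none => simp [not_hasSuffixRoom_cons_of_forwardSpot_eq_none hp hpn h]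
    | some s =>
      rw [hasSuffixRoom_cons_iff hp h]
      refine ih (fun q hq => hl q (List.mem_cons_of_mem p hq)) fun x hx => ?_
      rcases mem_insert.1 hx with rfl | hx
      exacts [(forwardSpot_eq_some h).2.1, hocc x hx]

def numBelow {m k : ℕ} (a : Fin m → Fin k) (t : ℕ) : ℕ := #{j | (a j : ℕ) < t}

/-- The condition `b_t ≤ t` on the sorted rearrangement `b`, for `0`-based preferences: at least
`t` preferences are `< t`. -/
def IsParking {m k : ℕ} (a : Fin m → Fin k) : Prop := ∀ t ≤ m, t ≤ numBelow a t

theorem numBelow_eq_of_le {m k t : ℕ} (a : Fin m → Fin k) (h : k ≤ t) : numBelow a t = m := by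
  simp [numBelow, filter_true_of_mem fun j _ => (a j).isLt.trans_le h]

theorem numBelow_zero {m k : ℕ} (a : Fin m → Fin k) : numBelow a 0 = 0 := by
  simp [numBelow]

theorem numBelow_le {m k : ℕ} (a : Fin m → Fin k) (t : ℕ) : numBelow a t ≤ m :=
  (card_filter_le _ _).trans_eq (card_fin m)

theorem IsParking.val_lt {m k : ℕ} {a : Fin m → Fin k} (h : IsParking a) (j : Fin m) :
    (a j : ℕ) < m :=
  card_filter_eq_iff.1 ((numBelow_le a m).antisymm (h m le_rfl) |>.trans (card_fin m).symm) j
    (mem_univ j)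

theorem prefList_eq_ofFn {m k : ℕ} (a : Fin m → Fin k) :
    prefList a = List.ofFn fun j => (a j : ℕ) + 1 := by
  simp only [prefList, bind_pure_comp, List.map_eq_map, List.map_ofFn]
  rfl

theorem countP_prefList {m k : ℕ} (a : Fin m → Fin k) (t : ℕ) :
    (prefList a).countP (fun p => decide (t + 1 ≤ p)) + numBelow a t = m := by
  rw [prefList_eq_ofFn, List.countP_ofFn (P := fun x => t + 1 ≤ x)]
  simp only [numBelow, ← not_lt, Nat.add_lt_add_iff_right]
  rw [add_comm, card_filter_add_card_filter_not, card_univ, Fintype.card_fin]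

theorem mem_PFset_iff {n : ℕ} (a : Fin n → Fin n) : a ∈ PFset n n ↔ IsParking a := by
  have hl : ∀ p ∈ prefList a, 1 ≤ p ∧ p ≤ n := by
    simp only [prefList_eq_ofFn, List.mem_ofFn]
    rintro _ ⟨j, rfl⟩
    exact ⟨by omega, (a j).isLt⟩
  rw [PFset, mem_filter, classicalPark_isSome_iff hl (by simp)]
  simp only [mem_univ, true_and, HasSuffixRoom, filter_empty, card_empty, add_zero]
  constructor
  · intro hroom t ht
    rcases ht.lt_or_eq with ht | rfl
    · have := hroom (t + 1) (by omega) ht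
      have := countP_prefList a t
      omega
    · rw [numBelow_eq_of_le a le_rfl]
  · intro hpark i hi hin
    have := hpark (i - 1) (by omega)
    have := countP_prefList a (i - 1)
    rw [Nat.sub_add_cancel hi] at this
    omega

theorem natCard_isParking_eq_of_le {m k : ℕ} (hmk : m ≤ k) :
    Nat.card {a : Fin m → Fin m // IsParking a} = Nat.card {a : Fin m → Fin k // IsParking a} := by
  have hcast (a : Fin m → Fin m) : IsParking (Fin.castLE hmk ∘ a) ↔ IsParking a := by
    simp [IsParking, numBelow]
  refine Nat.card_eq_of_bijective (fun a => ⟨Fin.castLE hmk ∘ a.1, (hcast a.1).2 a.2⟩)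
    ⟨fun a b hab => Subtype.ext ?_, fun g => ⟨⟨fun j => ⟨g.1 j, g.2.val_lt j⟩, ?_⟩, ?_⟩⟩
  · exact (Fin.castLE_injective hmk).comp_left (congrArg Subtype.val hab)
  · exact (hcast _).1 g.2
  · rfl

section LeastArgmin

variable {α : Type*} [LinearOrder α]

def IsLeastArgminOn (f : ℕ → α) (n a : ℕ) : Prop :=
  a ≤ n ∧ (∀ m ≤ n, f a ≤ f m) ∧ ∀ m < a, f a < f m

theorem IsLeastArgminOn.unique {f : ℕ → α} {n a b : ℕ} (ha : IsLeastArgminOn f n a)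
    (hb : IsLeastArgminOn f n b) : a = b := by
  by_contra hab
  rcases Nat.lt_or_gt_of_ne hab with h | h
  · exact (hb.2.2 a h).not_ge (ha.2.1 b hb.1)
  · exact (ha.2.2 b h).not_ge (hb.2.1 a ha.1)

theorem exists_isLeastArgminOn (f : ℕ → α) (n : ℕ) : ∃ a, IsLeastArgminOn f n a := by
  classical
  have hmin : ∃ a, a ≤ n ∧ ∀ m ≤ n, f a ≤ f m := by
    obtain ⟨a, ha, hmin⟩ := (range (n + 1)).exists_min_image f ⟨0, by simp⟩
    exact ⟨a, by simpa [Nat.lt_succ_iff] using ha,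
      fun m hm => hmin m (by simpa [Nat.lt_succ_iff] using hm)⟩
  obtain ⟨han, hamin⟩ := Nat.find_spec hmin
  refine ⟨Nat.find hmin, han, hamin, fun m hm => ?_⟩
  obtain ⟨m', hm', hlt⟩ : ∃ m' ≤ n, f m' < f m := by
    have := Nat.find_min hmin hm
    push Not at this
    exact this (hm.le.trans han)
  exact (hamin m' hm').trans_lt hlt

end LeastArgmin

section Circle

variable {n : ℕ}

theorem numBelow_sub_add (g : Fin n → Fin (n + 1)) (c : Fin (n + 1)) {t : ℕ} (ht : t ≤ n) :
    numBelow (fun j => g j - c) t + numBelow g c =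
      numBelow g (c + t) + numBelow g (c + t - (n + 1)) := by
  simp only [numBelow, card_filter, ← sum_add_distrib]
  refine sum_congr rfl fun j _ => ?_
  have := (g j).isLt
  rcases le_or_gt c (g j) with h | h
  · rw [Fin.sub_val_of_le h]; split_ifs <;> omega
  · rw [Fin.coe_sub_iff_lt.2 h]; split_ifs <;> omega

theorem isParking_sub_iff (g : Fin n → Fin (n + 1)) (c : Fin (n + 1)) :
    IsParking (fun j => g j - c) ↔ IsLeastArgminOn (fun m => (numBelow g m : ℤ) - m) n c := by
  have hc := c.is_le
  have hstay {t : ℕ} (h : c + t ≤ n) :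
      numBelow (fun j => g j - c) t + numBelow g c = numBelow g (c + t) := by
    have := numBelow_sub_add g c (t := t) (by omega)
    rwa [Nat.sub_eq_zero_of_le (by omega), numBelow_zero, add_zero] at this
  have hwrap {t : ℕ} (ht : t ≤ n) (h : n < c + t) :
      numBelow (fun j => g j - c) t + numBelow g c = n + numBelow g (c + t - (n + 1)) := by
    have := numBelow_sub_add g c ht
    rw [numBelow_eq_of_le g (t := c + t) (by omega)] at this
    omega
  simp only [IsParking, IsLeastArgminOn]
  constructor
  · intro hpark
    have hfirst (m : ℕ) (hm : m < c) : (numBelow g c : ℤ) - c < numBelow g m - m := by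
      have h1 := hpark (m + (n + 1) - c) (by omega)
      have h2 := hwrap (t := m + (n + 1) - c) (by omega) (by omega)
      rw [show (c : ℕ) + (m + (n + 1) - c) - (n + 1) = m by omega] at h2
      omega
    refine ⟨hc, fun m hm => ?_, hfirst⟩
    rcases le_or_gt (c : ℕ) m with hcm | hmc
    · have h1 := hpark (m - c) (by omega)
      have h2 := hstay (t := m - c) (by omega)
      rw [Nat.add_sub_cancel' hcm] at h2
      omega
    · exact (hfirst m hmc).le
  · rintro ⟨-, hmin, hfirst⟩ t ht
    rcases le_or_gt (c + t) n with h | h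
    · have h1 := hmin (c + t) h
      have h2 := hstay h
      push_cast at h1
      omega
    · have h1 := hfirst (c + t - (n + 1)) (by omega)
      have h2 := hwrap ht h
      omega

theorem existsUnique_isParking_sub (g : Fin n → Fin (n + 1)) :
    ∃! c : Fin (n + 1), IsParking (fun j => g j - c) := by
  obtain ⟨a, ha⟩ := exists_isLeastArgminOn (fun m => (numBelow g m : ℤ) - m) n
  exact ⟨⟨a, Nat.lt_succ_of_le ha.1⟩, (isParking_sub_iff g _).2 ha,
    fun c hc => Fin.ext (((isParking_sub_iff g c).1 hc).unique ha)⟩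

end Circle

theorem natCard_isParking_mul (n : ℕ) :
    Nat.card {g : Fin n → Fin (n + 1) // IsParking g} * (n + 1) = (n + 1) ^ n := by
  have hbij : Function.Bijective
      fun p : {g : Fin n → Fin (n + 1) // IsParking g} × Fin (n + 1) => fun j => p.1.1 j + p.2 := by
    refine ⟨fun ⟨⟨g₁, h₁⟩, c₁⟩ ⟨⟨g₂, h₂⟩, c₂⟩ heq => ?_, fun f => ?_⟩
    · obtain ⟨c, -, huniq⟩ := existsUnique_isParking_sub fun j => g₁ j + c₁
      have heq' (j : Fin n) : g₁ j + c₁ = g₂ j + c₂ := congrFun heq j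
      have hc : c₁ = c₂ :=
        (huniq c₁ (by simpa using h₁)).trans (huniq c₂ (by simpa [heq'] using h₂)).symm
      subst hc
      simp only [Prod.mk.injEq, Subtype.mk.injEq, and_true]
      funext j
      exact add_right_cancel (heq' j)
    · obtain ⟨c, hc, -⟩ := existsUnique_isParking_sub f
      exact ⟨⟨⟨_, hc⟩, c⟩, by funext j; simp⟩
  have := Nat.card_eq_of_bijective _ hbij
  rw [Nat.card_prod, Nat.card_fun] at this
  simpa using this

theorem pf_count_square_general (n : ℕ) :
    (PFset n n).card = (n + 1) ^ (n - 1) := by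
  have hcard : (PFset n n).card = Nat.card {g : Fin n → Fin (n + 1) // IsParking g} := by
    rw [← Nat.card_eq_finsetCard, ← natCard_isParking_eq_of_le n.le_succ]
    exact Nat.card_congr (Equiv.subtypeEquivRight mem_PFset_iff)
  have hcircle := natCard_isParking_mul n
  rw [hcard]
  rcases n with _ | n
  · simpa using hcircle
  · rw [pow_succ] at hcircle
    rw [Nat.add_sub_cancel]
    exact Nat.eq_of_mul_eq_mul_right (by omega) hcircle

theorem pf_count_square (n : ℕ) (hn : 1 ≤ n) :
    (PFset n n).card = (n + 1) ^ (n - 1) :=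
  pf_count_square_general n
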